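/- arXiv:2305.06473 — 4 statements merged into one kernel-verified Lean document; each statement's English description precedes it below -/
import Mathlib

section
/- (Gaussian mechanism, Theorem 1) Let ε ∈ (0,1), δ ∈ (0,1), and S > 0 be real numbers, and let ς > 0 satisfy ς² > 2·log(1.25/δ)·S²/ε². Then for all real numbers a and b with |a − b| ≤ S and every measurable set s ⊆ ℝ, the Gaussian measure with mean a and variance ς² satisfies N(a, ς²)(s) ≤ e^ε · N(b, ς²)(s) + δ. -/
/-!
The privacy loss `L(x) = log (φ_a(x) / φ_b(x))` of two Gaussian densities with common variance
`ς²` is affine in `x`. Off the set `{L > ε}` the density of `N(a, ς²)` is at most `e^ε` times that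
of `N(b, ς²)`, so `N(a, ς²)(s) ≤ e^ε N(b, ς²)(s) + N(a, ς²)(L > ε)`. Under `N(a, ς²)` the event
`L > ε` is a standard Gaussian exceeding `t = ςε/|a - b| - |a - b|/(2ς) ≥ c - 1/(2c)`, where
`c = ςε/S`. Comparing `N(0, 1)` with `N(t, 1)` through the same density ratio gives the tail bound
`e^{-t²/2}/2`, and `t² ≥ c² - 1` makes this at most `1.25 e^{-c²/2} < δ`; when `c² < 1/2` a
cruder bound on `N(0, 1)(-1, ∞)` suffices.
-/

open MeasureTheory Real Set ProbabilityTheory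
open scoped ENNReal NNReal

namespace ProbabilityTheory

noncomputable def gaussianPrivacyLoss (a b : ℝ) (v : ℝ≥0) (x : ℝ) : ℝ :=
  (a - b) * (2 * x - a - b) / (2 * v)

lemma gaussianPDFReal_eq_exp_gaussianPrivacyLoss_mul (a b : ℝ) (v : ℝ≥0) (x : ℝ) :
    gaussianPDFReal a v x = rexp (gaussianPrivacyLoss a b v x) * gaussianPDFReal b v x := by
  simp only [gaussianPDFReal, gaussianPrivacyLoss]
  rw [mul_left_comm, ← Real.exp_add]
  congr 2
  ring

lemma gaussianReal_le_exp_mul_add (a b : ℝ) {v : ℝ≥0} (hv : v ≠ 0) (ε : ℝ) (s : Set ℝ) :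
    gaussianReal a v s ≤ ENNReal.ofReal (rexp ε) * gaussianReal b v s
      + gaussianReal a v (s ∩ {x | ε < gaussianPrivacyLoss a b v x}) := by
  set B := {x | ε < gaussianPrivacyLoss a b v x}
  have hgood : gaussianReal a v (s \ B) ≤ ENNReal.ofReal (rexp ε) * gaussianReal b v s := by
    rw [gaussianReal_apply a hv, gaussianReal_apply b hv,
      ← lintegral_const_mul _ (measurable_gaussianPDF b v)]
    refine (setLIntegral_mono ((measurable_gaussianPDF b v).const_mul _) fun x hx ↦ ?_).trans
      (lintegral_mono_set sdiff_subset)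
    rw [gaussianPDF, gaussianPDF, ← ENNReal.ofReal_mul (exp_nonneg ε),
      gaussianPDFReal_eq_exp_gaussianPrivacyLoss_mul a b]
    exact ENNReal.ofReal_le_ofReal <| mul_le_mul_of_nonneg_right
      (exp_le_exp.2 (not_lt.1 hx.2)) (gaussianPDFReal_nonneg _ _ _)
  calc gaussianReal a v s = gaussianReal a v (s \ B ∪ s ∩ B) := by rw [sdiff_union_inter]
    _ ≤ gaussianReal a v (s \ B) + gaussianReal a v (s ∩ B) := measure_union_le _ _
    _ ≤ _ := by gcongr

lemma gaussianReal_Ioi_self (m : ℝ) {v : ℝ≥0} (hv : v ≠ 0) :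
    gaussianReal m v (Ioi m) = 2⁻¹ := by
  have := nullSingletonClass_gaussianReal (μ := m) hv
  have hsymm : gaussianReal m v (Iio m) = gaussianReal m v (Ioi m) := by
    have hreflect := gaussianReal_map_const_sub (μ := m) (v := v) (2 * m)
    rw [two_mul, add_sub_cancel_right] at hreflect
    conv_rhs => rw [← hreflect, Measure.map_apply (by fun_prop) measurableSet_Ioi]
    congr 1
    ext x
    simp only [mem_Iio, mem_preimage, mem_Ioi]
    constructor <;> intro <;> linarith
  have htotal : gaussianReal m v (Iio m) + gaussianReal m v (Ioi m) = 1 := by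
    rw [← measure_union Ioi_disjoint_Iio_same.symm measurableSet_Ioi, Iio_union_Ioi,
      measure_compl (measurableSet_singleton m) (measure_ne_top _ _), measure_singleton,
      measure_univ, tsub_zero]
  rw [hsymm, ← mul_two] at htotal
  exact ENNReal.eq_inv_of_mul_eq_one_left htotal

lemma gaussianReal_Ioi_le_exp_mul_half (m : ℝ) {v : ℝ≥0} (hv : v ≠ 0) {t : ℝ} (hmt : m ≤ t) :
    gaussianReal m v (Ioi t) ≤ ENNReal.ofReal (rexp (-(t - m) ^ 2 / (2 * v))) * 2⁻¹ := by
  have hempty : Ioi t ∩ {x | -(t - m) ^ 2 / (2 * v) < gaussianPrivacyLoss m t v x} = ∅ := by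
    ext x
    simp only [mem_inter_iff, mem_Ioi, mem_ofPred_eq, gaussianPrivacyLoss, mem_empty_iff_false,
      iff_false, not_and, not_lt]
    intro hx
    gcongr
    nlinarith
  have h := gaussianReal_le_exp_mul_add m t hv (-(t - m) ^ 2 / (2 * v)) (Ioi t)
  rwa [hempty, measure_empty, add_zero, gaussianReal_Ioi_self t hv] at h

lemma gaussianReal_le_ofReal_mul_volume (m : ℝ) {v : ℝ≥0} (hv : v ≠ 0) (s : Set ℝ) :
    gaussianReal m v s ≤ ENNReal.ofReal (√(2 * π * v))⁻¹ * volume s := by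
  rw [gaussianReal_apply m hv, ← setLIntegral_const]
  refine lintegral_mono fun x ↦ ENNReal.ofReal_le_ofReal ?_
  refine mul_le_of_le_one_right (by positivity) (exp_le_one_iff.2 ?_)
  exact div_nonpos_of_nonpos_of_nonneg (neg_nonpos.2 (sq_nonneg _)) (by positivity)

lemma gaussianReal_Ioi_le_half_add (m : ℝ) {v : ℝ≥0} (hv : v ≠ 0) {t : ℝ} (htm : t ≤ m) :
    gaussianReal m v (Ioi t) ≤ 2⁻¹ + ENNReal.ofReal ((m - t) / √(2 * π * v)) := by
  calc gaussianReal m v (Ioi t) = gaussianReal m v (Ioc t m ∪ Ioi m) := by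
        rw [Ioc_union_Ioi_eq_Ioi htm]
    _ ≤ gaussianReal m v (Ioc t m) + gaussianReal m v (Ioi m) := measure_union_le _ _
    _ ≤ ENNReal.ofReal (√(2 * π * v))⁻¹ * volume (Ioc t m) + 2⁻¹ := by
        rw [gaussianReal_Ioi_self m hv]
        gcongr
        exact gaussianReal_le_ofReal_mul_volume m hv _
    _ = _ := by
        rw [Real.volume_Ioc, ← ENNReal.ofReal_mul (by positivity), add_comm, inv_mul_eq_div]

lemma gaussianReal_zero_one_Ioi_le_of_half_le_sq {c t : ℝ} (hc : 0 < c) (hc2 : 1 / 2 ≤ c ^ 2)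
    (ht : c - 1 / (2 * c) ≤ t) :
    gaussianReal 0 1 (Ioi t) ≤ ENNReal.ofReal (5 / 4 * rexp (-c ^ 2 / 2)) := by
  have ht₀ : 0 ≤ c - 1 / (2 * c) := by
    rw [sub_nonneg, div_le_iff₀ (by positivity)]
    nlinarith
  have ht₀sq : (c - 1 / (2 * c)) ^ 2 = c ^ 2 - 1 + 1 / (4 * c ^ 2) := by
    field_simp
    ring
  have htsq : c ^ 2 - 1 ≤ t ^ 2 := by
    nlinarith [pow_le_pow_left₀ ht₀ ht 2, show 0 < 1 / (4 * c ^ 2) by positivity]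
  have hexp_half : rexp (1 / 2) ≤ 5 / 2 := by
    have h : rexp (1 / 2) ^ 2 = rexp 1 := by rw [← exp_nat_mul]; norm_num
    nlinarith [exp_one_lt_d9, exp_pos (1 / 2)]
  refine (gaussianReal_Ioi_le_exp_mul_half 0 one_ne_zero (ht₀.trans ht)).trans ?_
  rw [← ENNReal.ofReal_ofNat 2, ← ENNReal.ofReal_inv_of_pos two_pos,
    ← ENNReal.ofReal_mul (exp_nonneg _)]
  refine ENNReal.ofReal_le_ofReal ?_
  calc rexp (-(t - 0) ^ 2 / (2 * ((1 : ℝ≥0) : ℝ))) * 2⁻¹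
      ≤ rexp (1 / 2) * rexp (-c ^ 2 / 2) * 2⁻¹ := by
        rw [← exp_add]
        gcongr
        push_cast
        linarith
    -- `e^{1/2} / 2 ≤ 5/4` is where the constant `1.25` of the Gaussian mechanism comes from.
    _ ≤ 5 / 4 * rexp (-c ^ 2 / 2) := by nlinarith [exp_pos (-c ^ 2 / 2)]

lemma gaussianReal_zero_one_Ioi_neg_one_le :
    gaussianReal 0 1 (Ioi (-1)) ≤ ENNReal.ofReal (15 / 16) := by
  have hsqrt : 16 / 7 ≤ √(2 * π * ((1 : ℝ≥0) : ℝ)) := by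
    rw [NNReal.coe_one, mul_one, Real.le_sqrt' (by norm_num)]
    nlinarith [pi_gt_three]
  have h : (0 - -1) / √(2 * π * ((1 : ℝ≥0) : ℝ)) ≤ 7 / 16 := by
    rw [zero_sub, neg_neg, div_le_iff₀ (by positivity)]
    linarith
  refine (gaussianReal_Ioi_le_half_add 0 one_ne_zero (by norm_num)).trans ?_
  rw [← ENNReal.ofReal_ofNat 2, ← ENNReal.ofReal_inv_of_pos two_pos,
    ← ENNReal.ofReal_add (by norm_num) (by positivity)]
  exact ENNReal.ofReal_le_ofReal (by linarith)

lemma gaussianReal_zero_one_Ioi_le {c t : ℝ} (hc : 0 < c) (ht : c - 1 / (2 * c) ≤ t) :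
    gaussianReal 0 1 (Ioi t) ≤ ENNReal.ofReal (5 / 4 * rexp (-c ^ 2 / 2)) := by
  rcases le_or_gt 1 (5 / 4 * rexp (-c ^ 2 / 2)) with hbig | hsmall
  · exact prob_le_one.trans (ENNReal.one_le_ofReal.2 hbig)
  rcases le_or_gt (1 / 2) (c ^ 2) with hc2 | hc2
  · exact gaussianReal_zero_one_Ioi_le_of_half_le_sq hc hc2 ht
  -- By `1 - x ≤ e^{-x}`, `hsmall` forces `2/5 < c²`, and `c² < 1/2` gives
  -- `15/16 < 5/4 e^{-c²/2}`.
  have hlin := add_one_le_exp (-c ^ 2 / 2)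
  have ht₁ : -1 ≤ t := by
    have h : 1 / (2 * c) ≤ c + 1 := by
      rw [div_le_iff₀ (by positivity)]
      nlinarith
    linarith
  calc gaussianReal 0 1 (Ioi t)
      ≤ gaussianReal 0 1 (Ioi (-1)) := measure_mono (Ioi_subset_Ioi ht₁)
    _ ≤ ENNReal.ofReal (15 / 16) := gaussianReal_zero_one_Ioi_neg_one_le
    _ ≤ ENNReal.ofReal (5 / 4 * rexp (-c ^ 2 / 2)) := ENNReal.ofReal_le_ofReal (by nlinarith)

lemma gaussianReal_lt_gaussianPrivacyLoss {a b : ℝ} (hab : a ≠ b) {v : ℝ≥0} (hv : v ≠ 0)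
    (ε : ℝ) :
    gaussianReal a v {x | ε < gaussianPrivacyLoss a b v x}
      = gaussianReal 0 1 (Ioi (√v * ε / |a - b| - |a - b| / (2 * √v))) := by
  set σ := √(v : ℝ)
  have hσ : 0 < σ := Real.sqrt_pos.2 (NNReal.coe_pos.2 (pos_iff_ne_zero.2 hv))
  have hσv : σ ^ 2 = v := Real.sq_sqrt v.coe_nonneg
  set k := (a - b) / (|a - b| * σ)
  have hstd : (gaussianReal a v).map (fun x ↦ k * (x - a)) = gaussianReal 0 1 := by
    have hcomp : (fun x ↦ k * (x - a)) = (k * ·) ∘ (· - a) := rfl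
    rw [hcomp, ← Measure.map_map (by fun_prop) (by fun_prop), gaussianReal_map_sub_const,
      gaussianReal_map_const_mul, sub_self, mul_zero]
    congr
    ext
    simp only [k, NNReal.coe_mul, NNReal.coe_mk, NNReal.coe_one, div_pow, mul_pow, sq_abs, hσv]
    field_simp
  have hloss (x : ℝ) : k * (x - a) - (σ * ε / |a - b| - |a - b| / (2 * σ))
      = (gaussianPrivacyLoss a b v x - ε) * (σ / |a - b|) := by
    simp only [k, gaussianPrivacyLoss]
    rw [← hσv]
    field_simp
    rw [sq_abs]
    ring
  have hset : {x | ε < gaussianPrivacyLoss a b v x}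
      = (fun x ↦ k * (x - a)) ⁻¹' Ioi (σ * ε / |a - b| - |a - b| / (2 * σ)) := by
    ext x
    rw [mem_ofPred_eq, mem_preimage, mem_Ioi, ← sub_pos, ← sub_pos (a := k * (x - a)), hloss]
    exact (mul_pos_iff_of_pos_right (by positivity)).symm
  rw [hset, ← Measure.map_apply (by fun_prop) measurableSet_Ioi, hstd]

lemma gaussianReal_lt_gaussianPrivacyLoss_le {ε δ S : ℝ} {v : ℝ≥0} (hε₀ : 0 < ε)
    (hε₁ : ε ≤ 1) (hδ : 0 < δ) (hv : v ≠ 0) (hvar : 2 * log (1.25 / δ) * S ^ 2 / ε ^ 2 < v)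
    {a b : ℝ} (hab : |a - b| ≤ S) :
    gaussianReal a v {x | ε < gaussianPrivacyLoss a b v x} ≤ ENNReal.ofReal δ := by
  rcases eq_or_ne a b with rfl | hne
  · simp [gaussianPrivacyLoss, hε₀.not_gt]
  have hd : 0 < |a - b| := abs_pos.2 (sub_ne_zero.2 hne)
  have hS : 0 < S := hd.trans_le hab
  set c := √v * ε / S
  have hlog : log (1.25 / δ) < c ^ 2 / 2 := by
    rw [div_lt_iff₀ (by positivity)] at hvar
    rw [div_pow, mul_pow, Real.sq_sqrt v.coe_nonneg, div_div, lt_div_iff₀ (by positivity)]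
    linarith
  have hexp : 5 / 4 * rexp (-c ^ 2 / 2) ≤ δ := by
    have h := exp_lt_exp.2 hlog
    rw [exp_log (by positivity), div_lt_iff₀ hδ] at h
    rw [neg_div, exp_neg, ← div_eq_mul_inv, div_le_iff₀ (exp_pos _)]
    linarith
  rw [gaussianReal_lt_gaussianPrivacyLoss hne hv]
  refine (gaussianReal_zero_one_Ioi_le (c := c) (by positivity) ?_).trans
    (ENNReal.ofReal_le_ofReal hexp)
  calc c - 1 / (2 * c) = √v * ε / S - S / (2 * √v * ε) := by
        simp only [c]
        field_simp
    _ ≤ √v * ε / S - S / (2 * √v) := by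
        refine sub_le_sub_left (div_le_div_of_nonneg_left hS.le (by positivity) ?_) _
        exact mul_le_of_le_one_right (by positivity) hε₁
    _ ≤ √v * ε / |a - b| - |a - b| / (2 * √v) := by gcongr

end ProbabilityTheory

theorem gaussian_mechanism_dp_general
    (ε δ S ς : ℝ) (hε : ε ∈ Set.Ioo (0 : ℝ) 1) (hδ : δ ∈ Set.Ioo (0 : ℝ) 1)
    (hς : 0 < ς)
    (hvar : ς ^ 2 > 2 * Real.log (1.25 / δ) * S ^ 2 / ε ^ 2) :
    ∀ a b : ℝ, |a - b| ≤ S → ∀ s : Set ℝ, MeasurableSet s →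
      ProbabilityTheory.gaussianReal a (⟨ς ^ 2, sq_nonneg ς⟩ : NNReal) s ≤
        ENNReal.ofReal (Real.exp ε) * ProbabilityTheory.gaussianReal b (⟨ς ^ 2, sq_nonneg ς⟩ : NNReal) s
          + ENNReal.ofReal δ := by
  intro a b hab s _
  set v : ℝ≥0 := ⟨ς ^ 2, sq_nonneg ς⟩
  have hv : v ≠ 0 := ne_of_gt (show (0 : ℝ) < ς ^ 2 by positivity)
  calc gaussianReal a v s
      ≤ ENNReal.ofReal (rexp ε) * gaussianReal b v s
          + gaussianReal a v (s ∩ {x | ε < gaussianPrivacyLoss a b v x}) :=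
        gaussianReal_le_exp_mul_add a b hv ε s
    _ ≤ ENNReal.ofReal (rexp ε) * gaussianReal b v s + ENNReal.ofReal δ := by
        gcongr
        exact (measure_mono inter_subset_right).trans
          (gaussianReal_lt_gaussianPrivacyLoss_le hε.1 hε.2.le hδ.1 hv hvar hab)

/-- **Gaussian mechanism.** If the Gaussian noise variance `ς²` satisfies
`ς² > 2 log(1.25/δ) S² / ε²`, then for any two means `a b` with `|a - b| ≤ S`
(the `l₂` sensitivity), the Gaussian measures with mean `a` resp. `b` and
variance `ς²` satisfy the `(ε, δ)`-differential-privacy inequality. -/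
theorem gaussian_mechanism_dp
    (ε δ S ς : ℝ) (hε : ε ∈ Set.Ioo (0 : ℝ) 1) (hδ : δ ∈ Set.Ioo (0 : ℝ) 1)
    (hS : 0 < S) (hς : 0 < ς)
    (hvar : ς ^ 2 > 2 * Real.log (1.25 / δ) * S ^ 2 / ε ^ 2) :
    ∀ a b : ℝ, |a - b| ≤ S → ∀ s : Set ℝ, MeasurableSet s →
      ProbabilityTheory.gaussianReal a (⟨ς ^ 2, sq_nonneg ς⟩ : NNReal) s ≤
        ENNReal.ofReal (Real.exp ε) * ProbabilityTheory.gaussianReal b (⟨ς ^ 2, sq_nonneg ς⟩ : NNReal) s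
          + ENNReal.ofReal δ :=
  gaussian_mechanism_dp_general ε δ S ς hε hδ hς hvar
end

section
/- (Theorem 3, parallel composition) Let n ≥ 1 and for each i ∈ Fin n let D i be a measurable space with adjacency relation adj i, and let M i be a Markov kernel from D i to a measurable space R i that is (ε i, δ i)-differentially private with respect to adj i. Equip the product input space Π i, D i with the adjacency relation: a ≈ a' iff there exists an index j with adj j (a j) (a' j) and a i = a' i for all i ≠ j. Then the parallel mechanism a ↦ ⨂_i (M i (a i)) (the product measure of the per-block outputs) is (max_i ε i, max_i δ i)-differentially private with respect to ≈: for all a ≈ a' and every measurable s ⊆ Π i, R i, (⨂_i M i (a i))(s) ≤ e^{max_i ε i} · (⨂_i M i (a' i))(s) + max_i δ i. -/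
open MeasureTheory ProbabilityTheory

/-- **Parallel composition.** Each mechanism `M i` is `(ε i, δ i)`-differentially
private w.r.t. the adjacency relation `adj i` on its own (disjoint) data block `D i`.
Two inputs of the product space `Π i, D i` are adjacent iff they differ in exactly one
block `j`, adjacently in that block. Then the parallel mechanism
`a ↦ ⨂ i, M i (a i)` is `(max_i ε i, max_i δ i)`-differentially private. -/
theorem parallel_composition
    (n : ℕ) (hn : 1 ≤ n)
    (D : Fin n → Type*) [∀ i, MeasurableSpace (D i)]
    (adj : (i : Fin n) → D i → D i → Prop)
    (R : Fin n → Type*) [∀ i, MeasurableSpace (R i)]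
    (M : (i : Fin n) → Kernel (D i) (R i)) [∀ i, IsMarkovKernel (M i)]
    (ε δ : Fin n → ℝ)
    (hM : ∀ i : Fin n, ∀ b b' : D i, adj i b b' → ∀ s : Set (R i), MeasurableSet s →
      M i b s ≤ ENNReal.ofReal (Real.exp (ε i)) * M i b' s + ENNReal.ofReal (δ i)) :
    ∀ a a' : Π i, D i,
      (∃ j : Fin n, adj j (a j) (a' j) ∧ ∀ i : Fin n, i ≠ j → a i = a' i) →
      ∀ s : Set (Π i, R i), MeasurableSet s →
        Measure.pi (fun i => M i (a i)) s ≤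
          ENNReal.ofReal
              (Real.exp (Finset.univ.sup'
                (Finset.univ_nonempty_iff.mpr (Fin.pos_iff_nonempty.mp hn)) ε)) *
            Measure.pi (fun i => M i (a' i)) s
          + ENNReal.ofReal (Finset.univ.sup'
              (Finset.univ_nonempty_iff.mpr (Fin.pos_iff_nonempty.mp hn)) δ) := by
  have hne : (Finset.univ : Finset (Fin n)).Nonempty :=
    Finset.univ_nonempty_iff.mpr (Fin.pos_iff_nonempty.mp hn)
  set c := ENNReal.ofReal (Real.exp (Finset.univ.sup' hne ε)) with hc
  set d := ENNReal.ofReal (Finset.univ.sup' hne δ) with hd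
  obtain ⟨m, rfl⟩ : ∃ m, n = m + 1 := ⟨n - 1, (Nat.succ_pred_eq_of_pos hn).symm⟩
  rintro a a' ⟨j, haj, hoff⟩ s hs
  -- pointwise bound at coordinate j, with the larger constants
  have hcj : ENNReal.ofReal (Real.exp (ε j)) ≤ c :=
    ENNReal.ofReal_le_ofReal
      (Real.exp_le_exp.mpr (Finset.le_sup' ε (Finset.mem_univ j)))
  have hdj : ENNReal.ofReal (δ j) ≤ d :=
    ENNReal.ofReal_le_ofReal (Finset.le_sup' δ (Finset.mem_univ j))
  have hj : ∀ u : Set (R j), MeasurableSet u →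
      M j (a j) u ≤ c * M j (a' j) u + d := fun u hu =>
    (hM j _ _ haj u hu).trans (add_le_add (mul_le_mul' hcj le_rfl) hdj)
  -- split off coordinate j
  set e := MeasurableEquiv.piFinSuccAbove R j with he
  set t := e.symm ⁻¹' s with htdef
  have ht : MeasurableSet t := e.symm.measurable hs
  have hst : e ⁻¹' t = s := by
    ext x; simp [htdef]
  set π₂ : Measure (Π k, R (j.succAbove k)) :=
    Measure.pi fun k => M (j.succAbove k) (a' (j.succAbove k)) with hπ₂
  have htail : (fun k => (M (j.succAbove k)) (a (j.succAbove k))) =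
      fun k => (M (j.succAbove k)) (a' (j.succAbove k)) :=
    funext fun k => by rw [hoff _ (Fin.succAbove_ne j k)]
  have key : ∀ b : Π i, D i,
      Measure.pi (fun i => M i (b i)) s =
        ((M j (b j)).prod (Measure.pi fun k => M (j.succAbove k) (b (j.succAbove k)))) t := by
    intro b
    have hmp := measurePreserving_piFinSuccAbove (fun i => (M i) (b i)) j
    rw [← hmp.map_eq, Measure.map_apply e.measurable ht, hst]
  have keya := key a
  have keya' := key a'
  rw [htail] at keya
  rw [keya, keya', Measure.prod_apply_symm ht, Measure.prod_apply_symm ht]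
  have hmeas : Measurable fun y => (M j (a' j)) ((fun x => (x, y)) ⁻¹' t) :=
    measurable_measure_prodMk_right ht
  calc ∫⁻ y, (M j (a j)) ((fun x => (x, y)) ⁻¹' t) ∂π₂
      ≤ ∫⁻ y, (c * (M j (a' j)) ((fun x => (x, y)) ⁻¹' t) + d) ∂π₂ := by
        refine lintegral_mono fun y => hj _ ?_
        exact measurable_prodMk_right ht
    _ = c * ∫⁻ y, (M j (a' j)) ((fun x => (x, y)) ⁻¹' t) ∂π₂ + d * π₂ Set.univ := by
        rw [lintegral_add_right _ measurable_const, lintegral_const,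
          lintegral_const_mul c hmeas]
    _ = c * ∫⁻ y, (M j (a' j)) ((fun x => (x, y)) ⁻¹' t) ∂π₂ + d := by
        rw [measure_univ, mul_one]
end

section
/- (Argmin stability bound from the Theorem 5 proof) Let E be a real inner product space, let λ > 0, and let R, r : E → ℝ be differentiable on E with R λ-strongly convex on E. Suppose ω₁ ∈ E satisfies ∇R(ω₁) = 0 (ω₁ minimizes R) and ω₂ ∈ E satisfies ∇R(ω₂) + ∇r(ω₂) = 0 (ω₂ minimizes R + r). Then ‖ω₁ − ω₂‖ ≤ ‖∇r(ω₂)‖ / λ. -/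
open AffineMap RealInnerProductSpace

/-- **Argmin stability** (from the proof of Theorem 5). If `R` is `λ`-strongly convex
and differentiable, `ω₁` minimizes `R` (i.e. `∇R ω₁ = 0`) and `ω₂` minimizes `R + r`
(i.e. `∇R ω₂ + ∇r ω₂ = 0`), then the minimizer moves by at most `‖∇r ω₂‖ / λ`. -/
theorem argmin_stability
    {E : Type*} [NormedAddCommGroup E] [InnerProductSpace ℝ E] [CompleteSpace E]
    {lam : ℝ} (hlam : 0 < lam) {R r : E → ℝ}
    (hR : Differentiable ℝ R) (hr : Differentiable ℝ r)
    (hconv : StrongConvexOn Set.univ lam R)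
    {ω₁ ω₂ : E} (h₁ : gradient R ω₁ = 0) (h₂ : gradient R ω₂ + gradient r ω₂ = 0) :
    ‖ω₁ - ω₂‖ ≤ ‖gradient r ω₂‖ / lam := by
  set v : E := ω₁ - ω₂ with hv
  by_cases hv0 : v = 0
  · rw [hv0, norm_zero]
    positivity
  -- the auxiliary convex function g
  set g : E → ℝ := fun x => R x - lam / 2 * ‖x‖ ^ 2 with hg
  have hgconv : ConvexOn ℝ Set.univ g := strongConvexOn_iff_convex.mp hconv
  -- the line from ω₂ to ω₁
  set L : ℝ →ᵃ[ℝ] E := AffineMap.lineMap ω₂ ω₁ with hL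
  have hLt : ∀ t : ℝ, L t = ω₂ + t • v := by
    intro t
    simp [hL, AffineMap.lineMap_apply, hv]
    abel
  -- φ = g ∘ L is convex on ℝ
  have hφconv : ConvexOn ℝ Set.univ (g ∘ L) := by
    have := hgconv.comp_affineMap L
    simpa using this
  -- derivative of t ↦ R (L t)
  have hRd : ∀ t : ℝ, HasDerivAt (fun t => R (L t)) (⟪gradient R (L t), v⟫) t := by
    intro t
    have hfd : HasFDerivAt R ((InnerProductSpace.toDualMap ℝ E) (gradient R (L t)) : E →L[ℝ] ℝ)
        (L t) := hasGradientAt_iff_hasFDerivAt.mp (hR (L t)).hasGradientAt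
    have hline : HasDerivAt (fun t : ℝ => L t) v t := by
      simp only [hLt]
      simpa using ((hasDerivAt_id t).smul_const v).const_add ω₂
    have := hfd.comp_hasDerivAt t hline
    exact this
  -- derivative of t ↦ lam/2 * ‖L t‖^2
  have hqd : ∀ t : ℝ, HasDerivAt (fun t => lam / 2 * ‖L t‖ ^ 2)
      (lam * (⟪ω₂, v⟫ + t * ‖v‖ ^ 2)) t := by
    intro t
    have hnorm : ∀ s : ℝ, lam / 2 * ‖L s‖ ^ 2
        = lam / 2 * (‖ω₂‖ ^ 2 + 2 * s * ⟪ω₂, v⟫ + s ^ 2 * ‖v‖ ^ 2) := by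
      intro s
      rw [hLt s]
      rw [← real_inner_self_eq_norm_sq, ← real_inner_self_eq_norm_sq (ω₂),
        ← real_inner_self_eq_norm_sq v]
      simp only [inner_add_add_self, real_inner_smul_left, real_inner_smul_right,
        real_inner_comm ω₂ v]
      ring
    simp only [hnorm]
    have : HasDerivAt (fun s : ℝ => lam / 2 * (‖ω₂‖ ^ 2 + 2 * s * ⟪ω₂, v⟫ + s ^ 2 * ‖v‖ ^ 2))
        (lam / 2 * (2 * ⟪ω₂, v⟫ + 2 * t * ‖v‖ ^ 2)) t := by
      have h1 : HasDerivAt (fun s : ℝ => ‖ω₂‖ ^ 2 + 2 * s * ⟪ω₂, v⟫ + s ^ 2 * ‖v‖ ^ 2)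
          (2 * ⟪ω₂, v⟫ + 2 * t * ‖v‖ ^ 2) t := by
        have ha : HasDerivAt (fun s : ℝ => 2 * s * ⟪ω₂, v⟫) (2 * ⟪ω₂, v⟫) t := by
          simpa [mul_comm, mul_assoc] using
            ((hasDerivAt_id t).const_mul 2).mul_const ⟪ω₂, v⟫
        have hb : HasDerivAt (fun s : ℝ => s ^ 2 * ‖v‖ ^ 2) (2 * t * ‖v‖ ^ 2) t := by
          simpa using ((hasDerivAt_pow 2 t).mul_const (‖v‖ ^ 2))
        have := (ha.const_add (‖ω₂‖ ^ 2)).add hb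
        exact this
      exact h1.const_mul (lam / 2)
    convert this using 1
    ring
  -- derivative of φ
  have hφd : ∀ t : ℝ, HasDerivAt (g ∘ L)
      (⟪gradient R (L t), v⟫ - lam * (⟪ω₂, v⟫ + t * ‖v‖ ^ 2)) t := by
    intro t
    exact (hRd t).sub (hqd t)
  -- monotone derivative
  have hmono := hφconv.monotoneOn_deriv (fun x _ => ((hφd x).differentiableAt))
  have hle : deriv (g ∘ L) 0 ≤ deriv (g ∘ L) 1 :=
    hmono (Set.mem_univ 0) (Set.mem_univ 1) zero_le_one
  rw [(hφd 0).deriv, (hφd 1).deriv] at hle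
  have hL0 : L (0 : ℝ) = ω₂ := by simp [hL]
  have hL1 : L (1 : ℝ) = ω₁ := by simp [hL]
  rw [hL0, hL1, h₁] at hle
  have hRω₂ : gradient R ω₂ = -gradient r ω₂ := by
    have := h₂; linear_combination (norm := abel) this
  rw [hRω₂] at hle
  simp only [inner_zero_left, inner_neg_left] at hle
  -- from hle : -⟪∇r ω₂, v⟫ - lam * (⟪ω₂,v⟫ + 0) ≤ 0 - lam * (⟪ω₂,v⟫ + 1*‖v‖²)
  have key : lam * ‖v‖ ^ 2 ≤ ⟪gradient r ω₂, v⟫ := by nlinarith [hle]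
  have hcs : ⟪gradient r ω₂, v⟫ ≤ ‖gradient r ω₂‖ * ‖v‖ := real_inner_le_norm _ _
  have hvpos : 0 < ‖v‖ := norm_pos_iff.mpr hv0
  rw [le_div_iff₀ hlam]
  nlinarith [key.trans hcs]
end

section
/- (Theorem 5) Let d ≥ 1 and E = EuclideanSpace ℝ (Fin d) with its Lebesgue measure. Let B ≥ 1 be a natural number (the batch size), S > 0 and ε > 0 real numbers, and set β = B·ε/(2·S). Let R, r : E → ℝ be differentiable on E, with R 1-strongly convex on E and ‖∇r(w)‖ ≤ 2·S/B for all w ∈ E. Let ω₁ ∈ E satisfy ∇R(ω₁) = 0 and ω₂ ∈ E satisfy ∇R(ω₂) + ∇r(ω₂) = 0. For c ≥ 0 and a center ω ∈ E, let ν(ω) be Lebesgue measure with density w ↦ c · exp(−β·‖w − ω‖). Then for every measurable set s ⊆ E, ν(ω₁)(s) ≤ e^ε · ν(ω₂)(s); that is, releasing the minimizer perturbed by noise with density proportional to exp(−β·‖μ‖) with β = B·ε/(2·S) satisfies the pure ε-differential-privacy inequality between the two neighboring batches. -/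
open MeasureTheory Real InnerProductSpace

section aux
variable {E : Type*} [NormedAddCommGroup E] [InnerProductSpace ℝ E] [CompleteSpace E]

lemma aux_hasFDeriv_half_normsq (x : E) :
    HasFDerivAt (fun w : E => 1 / 2 * ‖w‖ ^ 2) (InnerProductSpace.toDual ℝ E x) x := by
  have h := ((hasFDerivAt_id x).inner ℝ (hasFDerivAt_id x)).const_mul (1 / 2 : ℝ)
  have hfun : (fun w : E => 1 / 2 * ‖w‖ ^ 2) = fun w : E => 1 / 2 * ⟪id w, id w⟫_ℝ := by
    funext w; simp [real_inner_self_eq_norm_sq]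
  rw [hfun]
  refine h.congr_fderiv ?_
  ext v
  simp [fderivInnerCLM_apply, real_inner_comm]
  ring

lemma aux_first_order {g : E → ℝ} (hg : ConvexOn ℝ Set.univ g) (hd : Differentiable ℝ g)
    (x y : E) : ⟪gradient g x, y - x⟫_ℝ ≤ g y - g x := by
  set φ : ℝ → ℝ := fun t => g (x + t • (y - x)) with hφ
  have hφconv : ConvexOn ℝ Set.univ φ := by
    have h := hg.comp_affineMap (AffineMap.lineMap x y)
    have : (Set.univ : Set ℝ) = ⇑(AffineMap.lineMap x y) ⁻¹' Set.univ := by simp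
    rw [this]
    refine (?_ : g ∘ AffineMap.lineMap x y = φ) ▸ h
    funext t
    simp only [hφ, Function.comp_apply, AffineMap.lineMap_apply]
    rw [add_comm]; rfl
  have hc : HasDerivAt (fun t : ℝ => x + t • (y - x)) (y - x) (0 : ℝ) := by
    simpa using ((hasDerivAt_id (0:ℝ)).smul_const (y - x)).const_add x
  have hgd : HasFDerivAt g (InnerProductSpace.toDual ℝ E (gradient g x))
      (x + (0:ℝ) • (y - x)) := by
    simpa using (hd x).hasGradientAt.hasFDerivAt
  have hφd : HasDerivAt φ ⟪gradient g x, y - x⟫_ℝ 0 := by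
    have := hgd.comp_hasDerivAt (0 : ℝ) hc
    simpa [hφ, InnerProductSpace.toDual_apply_apply, Function.comp_def] using this
  have := hφconv.le_slope_of_hasDerivAt (Set.mem_univ 0) (Set.mem_univ 1) zero_lt_one hφd
  simpa [slope_def_field, hφ] using this

/-- Argmin stability: the distance between the minimizers is bounded by the
gradient norm of the perturbation. -/
lemma aux_argmin_stability {R : E → ℝ} (hR : Differentiable ℝ R)
    (hconv : StrongConvexOn Set.univ 1 R) {ω₁ ω₂ : E} {v : E}
    (h₁ : gradient R ω₁ = 0) (h₂ : gradient R ω₂ + v = 0) :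
    ‖ω₁ - ω₂‖ ≤ ‖v‖ := by
  set g : E → ℝ := fun x => R x - 1 / 2 * ‖x‖ ^ 2 with hg
  have hgconv : ConvexOn ℝ Set.univ g := by
    have := (strongConvexOn_iff_convex (m := 1)).mp hconv
    simpa [hg] using this
  have hgdiff : Differentiable ℝ g := fun x =>
    ((hR x).sub (aux_hasFDeriv_half_normsq x).differentiableAt)
  have hgradg : ∀ w : E, gradient g w = gradient R w - w := by
    intro w
    have h1 : HasFDerivAt R (InnerProductSpace.toDual ℝ E (gradient R w)) w :=
      (hR w).hasGradientAt.hasFDerivAt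
    have h2 := h1.sub (aux_hasFDeriv_half_normsq w)
    rw [← map_sub] at h2
    have h3 := h2.hasGradientAt.gradient
    rw [hg]
    rw [LinearIsometryEquiv.symm_apply_apply] at h3
    exact h3
  have hA := aux_first_order hgconv hgdiff ω₁ ω₂
  have hB := aux_first_order hgconv hgdiff ω₂ ω₁
  rw [hgradg, h₁, zero_sub] at hA
  rw [hgradg, eq_neg_of_add_eq_zero_left h₂] at hB
  have hsum : ⟪-ω₁, ω₂ - ω₁⟫_ℝ + ⟪-v - ω₂, ω₁ - ω₂⟫_ℝ ≤ 0 := by linarith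
  have hkey : ‖ω₁ - ω₂‖ ^ 2 ≤ ⟪v, ω₁ - ω₂⟫_ℝ := by
    have hexp : ⟪-ω₁, ω₂ - ω₁⟫_ℝ + ⟪-v - ω₂, ω₁ - ω₂⟫_ℝ
        = ⟪ω₁ - ω₂, ω₁ - ω₂⟫_ℝ - ⟪v, ω₁ - ω₂⟫_ℝ := by
      have c1 := real_inner_comm ω₁ ω₂
      have c2 := real_inner_comm v ω₁
      have c3 := real_inner_comm v ω₂
      simp only [inner_sub_left, inner_sub_right, inner_neg_left]
      linarith
    rw [hexp] at hsum
    rw [← real_inner_self_eq_norm_sq]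
    linarith
  rcases eq_or_ne ω₁ ω₂ with h | h
  · simp [h]
  · have hpos : 0 < ‖ω₁ - ω₂‖ := by
      simpa [norm_pos_iff, sub_eq_zero] using h
    have := hkey.trans (real_inner_le_norm v (ω₁ - ω₂))
    nlinarith

end aux

/-- **Theorem 5.** With batch size `B`, per-example gradient (sensitivity) bound `S`,
and `β = B ε / (2 S)`: if `R` (the empirical loss on one batch) is `1`-strongly convex
and differentiable, `r` (the difference of the losses on two neighboring batches)
satisfies `‖∇r w‖ ≤ 2S/B`, and `ω₁, ω₂` are the respective exact minimizers
(`∇R ω₁ = 0`, `∇R ω₂ + ∇r ω₂ = 0`), then releasing the minimizer perturbed by noise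
with density proportional to `exp (−β ‖μ‖)` satisfies the pure `ε`-differential-privacy
inequality between the two neighboring batches. -/
theorem objective_perturbation_pure_dp
    (d : ℕ) (hd : 1 ≤ d) (B : ℕ) (hB : 1 ≤ B) (S ε : ℝ) (hS : 0 < S) (hε : 0 < ε)
    (β : ℝ) (hβ : β = B * ε / (2 * S))
    {R r : EuclideanSpace ℝ (Fin d) → ℝ}
    (hR : Differentiable ℝ R) (hr : Differentiable ℝ r)
    (hconv : StrongConvexOn Set.univ 1 R)
    (hgrad : ∀ w : EuclideanSpace ℝ (Fin d), ‖gradient r w‖ ≤ 2 * S / B)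
    {ω₁ ω₂ : EuclideanSpace ℝ (Fin d)}
    (h₁ : gradient R ω₁ = 0) (h₂ : gradient R ω₂ + gradient r ω₂ = 0)
    (c : ℝ) (hc : 0 ≤ c) :
    ∀ s : Set (EuclideanSpace ℝ (Fin d)), MeasurableSet s →
      volume.withDensity (fun w => ENNReal.ofReal (c * Real.exp (-β * ‖w - ω₁‖))) s ≤
        ENNReal.ofReal (Real.exp ε) *
          volume.withDensity (fun w => ENNReal.ofReal (c * Real.exp (-β * ‖w - ω₂‖))) s := by
  have hBpos : (0:ℝ) < B := by exact_mod_cast hB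
  have hstab : ‖ω₁ - ω₂‖ ≤ 2 * S / B :=
    (aux_argmin_stability hR hconv h₁ h₂).trans (hgrad ω₂)
  have hβpos : 0 ≤ β := by
    rw [hβ]; positivity
  have hβstab : β * ‖ω₁ - ω₂‖ ≤ ε := by
    calc β * ‖ω₁ - ω₂‖ ≤ β * (2 * S / B) := by
          exact mul_le_mul_of_nonneg_left hstab hβpos
      _ = ε := by
          rw [hβ]; field_simp
  intro s hs
  rw [withDensity_apply _ hs, withDensity_apply _ hs,
    ← lintegral_const_mul' _ _ ENNReal.ofReal_ne_top]
  refine lintegral_mono fun w => ?_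
  rw [← ENNReal.ofReal_mul (exp_nonneg ε)]
  refine ENNReal.ofReal_le_ofReal ?_
  rw [mul_left_comm]
  refine mul_le_mul_of_nonneg_left ?_ hc
  rw [← Real.exp_add]
  refine Real.exp_le_exp.mpr ?_
  have htri : ‖w - ω₂‖ - ‖w - ω₁‖ ≤ ‖ω₁ - ω₂‖ := by
    have := norm_sub_norm_le (w - ω₂) (w - ω₁)
    calc ‖w - ω₂‖ - ‖w - ω₁‖ ≤ ‖(w - ω₂) - (w - ω₁)‖ := this
      _ = ‖ω₁ - ω₂‖ := by rw [sub_sub_sub_cancel_left, norm_sub_rev]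
  nlinarith [mul_le_mul_of_nonneg_left htri hβpos]
end
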